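/- Let C_1,…,C_m (m ≥ 2) be real full-row-rank matrices with n columns, K_i = kernel(C_i), P_i = C_iᵀ(C_iC_iᵀ)^{−1}C_i, and let M be the mn×mn block matrix whose i-th diagonal block is I_n − (1/2)P_i, whose (i, i−1) block (indices mod m) is (1/2)P_i, and whose remaining blocks are zero. If the weighted m-vertex directed cycle is well-configured (equivalently, the family {K_i : i ∈ {1,…,m}, K_i ≠ {0}} is independent), then the fixed point set {x ∈ ℝ^{mn} : Mx = x} equals span(Ī), the set of vectors whose m blocks in ℝ^n are all equal. -/

import Mathlib

open Matrix

/-- The `mn × mn` stacked update matrix of the cycle iteration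
`x i (t+1) = x i t − (1/2) P i (x i t − x (i-1) t)` (indices mod `m`): its `i`-th diagonal
block is `I − (1/2) P i`, its `(i, i-1)` block is `(1/2) P i`, and all other blocks vanish. -/
noncomputable def cycM (m n : ℕ) [NeZero m] (P : Fin m → Matrix (Fin n) (Fin n) ℝ) :
    Matrix (Fin m × Fin n) (Fin m × Fin n) ℝ :=
  Matrix.of fun p q =>
    (if q.1 = p.1 then ((1 : Matrix (Fin n) (Fin n) ℝ) - (1 / 2 : ℝ) • P p.1) p.2 q.2 else 0) +
    (if q.1 = p.1 - 1 then ((1 / 2 : ℝ) • P p.1) p.2 q.2 else 0)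

/-!
Because `Cᵢ (Cᵢᵀ (CᵢCᵢᵀ)⁻¹ Cᵢ) = Cᵢ`, the projection `Pᵢ` has the same kernel as `Cᵢ`.
Read blockwise, `M x = x` says `Pᵢ (xᵢ - xᵢ₋₁) = 0`, i.e. `Cᵢ xᵢ = Cᵢ xᵢ₋₁`, for every `i`;
well-configuredness turns this into equality of all blocks, and conversely a vector with equal
blocks is fixed since every difference `xᵢ - xᵢ₋₁` vanishes.
-/

namespace Matrix

variable {K ι κ : Type*} [Field K] [Fintype ι] [DecidableEq ι]

theorem isUnit_of_rank_eq_card {A : Matrix ι ι K} (h : A.rank = Fintype.card ι) : IsUnit A := by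
  rw [← mulVec_surjective_iff_isUnit, ← coe_mulVecLin, ← LinearMap.range_eq_top]
  exact Submodule.eq_top_of_finrank_eq (by rwa [Module.finrank_fintype_fun_eq_card])

theorem isUnit_mul_transpose_of_rank_eq_card [LinearOrder K] [IsStrictOrderedRing K] [Fintype κ]
    {C : Matrix ι κ K} (h : C.rank = Fintype.card ι) : IsUnit (C * Cᵀ) :=
  isUnit_of_rank_eq_card (by rwa [rank_self_mul_transpose])

theorem mul_transpose_mul_inv_mul_mulVec_eq_zero_iff [Fintype κ] {C : Matrix ι κ K}
    (hC : IsUnit (C * Cᵀ)) (v : κ → K) :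
    (Cᵀ * (C * Cᵀ)⁻¹ * C) *ᵥ v = 0 ↔ C *ᵥ v = 0 := by
  have hCP : C * (Cᵀ * (C * Cᵀ)⁻¹ * C) = C := by
    rw [← Matrix.mul_assoc, ← Matrix.mul_assoc, mul_nonsing_inv _ ((isUnit_iff_isUnit_det _).mp hC),
      Matrix.one_mul]
  constructor
  · intro h
    rw [← hCP, ← mulVec_mulVec, h, mulVec_zero]
  · intro h
    rw [← mulVec_mulVec, ← mulVec_mulVec, h, mulVec_zero, mulVec_zero]

end Matrix

section cycM

variable {m n : ℕ} [NeZero m] (P : Fin m → Matrix (Fin n) (Fin n) ℝ) (x : Fin m × Fin n → ℝ)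

theorem cycM_mulVec_apply (i : Fin m) (j : Fin n) :
    (cycM m n P *ᵥ x) (i, j) =
      x (i, j) - (1 / 2 : ℝ) * (P i *ᵥ (Function.curry x i - Function.curry x (i - 1))) j := by
  simp only [cycM, mulVec, dotProduct, of_apply, Fintype.sum_prod_type, add_mul,
    Finset.sum_add_distrib, ite_mul, zero_mul]
  rw [Finset.sum_comm, Finset.sum_comm (f := fun _ _ => ite _ _ _)]
  simp only [one_div, Matrix.sub_apply, one_apply, Matrix.smul_apply, smul_eq_mul, sub_mul,
    ite_mul, one_mul, zero_mul, mul_assoc, Finset.sum_ite_irrel, Finset.sum_sub_distrib,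
    Finset.sum_ite_eq, Finset.mem_univ, ↓reduceIte, Finset.sum_const_zero, Finset.sum_ite_eq', Pi.sub_apply,
    Function.curry_apply, mul_sub, Finset.mul_sum]
  ring

theorem cycM_mulVec_eq_self_iff :
    cycM m n P *ᵥ x = x ↔ ∀ i, P i *ᵥ (Function.curry x i - Function.curry x (i - 1)) = 0 := by
  simp only [funext_iff, Prod.forall, cycM_mulVec_apply, Pi.zero_apply]
  refine forall_congr' fun i => forall_congr' fun j => ?_
  constructor <;> intro h <;> linarith

end cycM

theorem stmt_17_general (m n : ℕ) [NeZero m] (k : Fin m → ℕ)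
    (C : (i : Fin m) → Matrix (Fin (k i)) (Fin n) ℝ)
    (hrank : ∀ i, (C i).rank = k i)
    (hwc : ∀ y : Fin m → (Fin n → ℝ),
      (∀ i : Fin m, (C i).mulVec (y i - y (i - 1)) = 0) → ∀ i j, y i = y j) :
    ∀ x : Fin m × Fin n → ℝ,
      (cycM m n fun i => (C i)ᵀ * (C i * (C i)ᵀ)⁻¹ * C i).mulVec x = x ↔
        ∃ z : Fin n → ℝ, ∀ p : Fin m × Fin n, x p = z p.2 := by
  intro x
  have hCCt (i : Fin m) : IsUnit (C i * (C i)ᵀ) :=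
    isUnit_mul_transpose_of_rank_eq_card (by rw [hrank, Fintype.card_fin])
  simp only [cycM_mulVec_eq_self_iff, mul_transpose_mul_inv_mul_mulVec_eq_zero_iff (hCCt _)]
  constructor
  · intro hker
    exact ⟨Function.curry x 0, fun p => congrFun (hwc (Function.curry x) hker p.1 0) p.2⟩
  · rintro ⟨z, hz⟩ i
    have hblocks : Function.curry x i = Function.curry x (i - 1) :=
      funext fun j => (hz (i, j)).trans (hz (i - 1, j)).symm
    rw [hblocks, sub_self, mulVec_zero]

/-- For full-row-rank matrices `C i` with `n` columns, `Pᵢ = Cᵢᵀ(CᵢCᵢᵀ)⁻¹Cᵢ` and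
the corresponding cycle update matrix `M`, if the weighted cycle is well-configured, then the
fixed point set `{x : M x = x}` is exactly `span Ī`, the set of stacked vectors whose `m`
blocks in `ℝⁿ` are all equal. -/
theorem stmt_17 (m n : ℕ) [NeZero m] (hm : 2 ≤ m) (k : Fin m → ℕ)
    (C : (i : Fin m) → Matrix (Fin (k i)) (Fin n) ℝ)
    (hrank : ∀ i, (C i).rank = k i)
    (hwc : ∀ y : Fin m → (Fin n → ℝ),
      (∀ i : Fin m, (C i).mulVec (y i - y (i - 1)) = 0) → ∀ i j, y i = y j) :
    ∀ x : Fin m × Fin n → ℝ,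
      (cycM m n fun i => (C i)ᵀ * (C i * (C i)ᵀ)⁻¹ * C i).mulVec x = x ↔
        ∃ z : Fin n → ℝ, ∀ p : Fin m × Fin n, x p = z p.2 :=
  stmt_17_general m n k C hrank hwc
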